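/- arXiv:math/0602357 — 6 statements merged into one kernel-verified Lean document; each statement's English description precedes it below -/
import Mathlib

section
/- For a partition λ, the sets {λ_i − 1 − i : i ∈ ℕ} and {−1 − (λᵗ_j − 1 − j) : j ∈ ℕ} = {j − λᵗ_j : j ∈ ℕ} are disjoint and their union is all of ℤ. -/
/-- A partition: a weakly decreasing, finitely supported sequence of naturals. -/
def IsPartition (f : ℕ → ℕ) : Prop :=
  (∀ i, f (i + 1) ≤ f i) ∧ ∃ N, ∀ i, N ≤ i → f i = 0

/-- The transpose partition: `λᵗ_j = #{i : j < λ_i}`. -/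
noncomputable def transposePart (f : ℕ → ℕ) (j : ℕ) : ℕ :=
  {i : ℕ | j < f i}.ncard

lemma transpose_lt_iff (lam : ℕ → ℕ) (hl : IsPartition lam) (i j : ℕ) :
    i < transposePart lam j ↔ j < lam i := by
  obtain ⟨hmono, N, hN⟩ := hl
  have hanti : Antitone lam := antitone_nat_of_succ_le hmono
  have hne : {k : ℕ | lam k ≤ j}.Nonempty := ⟨N, by simp [hN N le_rfl]⟩
  set m := sInf {k : ℕ | lam k ≤ j} with hm
  have hmem : lam m ≤ j := Nat.sInf_mem hne
  have hset : {k : ℕ | j < lam k} = Set.Iio m := by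
    ext k
    simp only [Set.mem_setOf_eq, Set.mem_Iio]
    constructor
    · intro hk
      by_contra h
      push_neg at h
      exact absurd hk (not_lt.2 (le_trans (hanti h) hmem))
    · intro hk
      have : k ∉ {k : ℕ | lam k ≤ j} := Nat.notMem_of_lt_sInf hk
      simpa using this
  unfold transposePart
  rw [hset, ← Finset.coe_Iio, Set.ncard_coe_finset, Nat.card_Iio]
  constructor
  · intro h
    by_contra h2
    push_neg at h2
    exact absurd h (not_lt.2 (Nat.sInf_le h2))
  · intro h
    by_contra h2
    push_neg at h2
    exact absurd h (not_lt.2 (le_trans (hanti h2) hmem))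

theorem vertical_and_horizontal_edge_coordinates_partition_Z
    (lam : ℕ → ℕ) (hl : IsPartition lam) :
    Disjoint {z : ℤ | ∃ i : ℕ, z = (lam i : ℤ) - 1 - i}
      {z : ℤ | ∃ j : ℕ, z = (j : ℤ) - transposePart lam j} ∧
    {z : ℤ | ∃ i : ℕ, z = (lam i : ℤ) - 1 - i} ∪
      {z : ℤ | ∃ j : ℕ, z = (j : ℤ) - transposePart lam j} = Set.univ := by
  constructor
  · rw [Set.disjoint_left]
    rintro z ⟨i, hi⟩ ⟨j, hj⟩
    rcases lt_or_ge j (lam i) with h | h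
    · have := (transpose_lt_iff lam hl i j).2 h
      omega
    · have h2 : ¬ i < transposePart lam j :=
        fun hc => absurd ((transpose_lt_iff lam hl i j).1 hc) (not_lt.2 h)
      omega
  · ext z
    simp only [Set.mem_union, Set.mem_setOf_eq, Set.mem_univ, iff_true]
    by_cases hc : (lam 0 : ℤ) - 1 < z
    · right
      have hz0 : 0 ≤ z := by have := Nat.zero_le (lam 0); omega
      refine ⟨z.toNat, ?_⟩
      have ht : transposePart lam z.toNat = 0 := by
        by_contra h
        have h1 : 0 < transposePart lam z.toNat := Nat.pos_of_ne_zero h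
        have := (transpose_lt_iff lam hl 0 z.toNat).1 h1
        omega
      rw [ht]
      omega
    · push_neg at hc
      obtain ⟨N, hN⟩ := hl.2
      have hQ : ∃ k, ¬ (z ≤ (lam k : ℤ) - 1 - k) := by
        refine ⟨N + z.natAbs + 1, ?_⟩
        have h0 : lam (N + z.natAbs + 1) = 0 := hN _ (by omega)
        rw [h0]
        omega
      set i0 := Nat.find hQ with hi0
      have hi0ne : i0 ≠ 0 := by
        intro h
        have := Nat.find_spec hQ
        rw [← hi0, h] at this
        simp at this
        omega
      set i := i0 - 1 with hidef
      have hii : i + 1 = i0 := by omega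
      have hPi : z ≤ (lam i : ℤ) - 1 - i := by
        by_contra h
        exact absurd h (Nat.find_min hQ (by omega))
      have hQi1 : ¬ (z ≤ (lam (i + 1) : ℤ) - 1 - (i + 1 : ℕ)) := by
        rw [hii]; exact Nat.find_spec hQ
      push_neg at hQi1
      rcases eq_or_lt_of_le hPi with heq | hlt
      · exact Or.inl ⟨i, heq⟩
      · right
        have hjnn : 0 ≤ z + i + 1 := by
          have := Nat.zero_le (lam (i + 1))
          push_cast at hQi1 ⊢
          omega
        set j := (z + i + 1).toNat with hjdef
        have hj : (j : ℤ) = z + i + 1 := Int.toNat_of_nonneg hjnn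
        have h1 : i < transposePart lam j :=
          (transpose_lt_iff lam hl i j).2 (by omega)
        have h2 : transposePart lam j ≤ i + 1 := by
          by_contra h
          push_neg at h
          have := (transpose_lt_iff lam hl (i + 1) j).1 h
          push_cast at hQi1
          omega
        refine ⟨j, ?_⟩
        omega
end

section
/- Let k > 0 and let μ ⊆ λ be partitions with |λ| − |μ| = k. Then λ/μ is a k-ribbon (its k squares lie on k consecutive diagonals D_d = {(i,j) : j − i = d}) if and only if there exist indices i₀, i₁ ∈ ℕ such that {[μ]_i : i ≠ i₀} = {[λ]_i : i ≠ i₁} as subsets of ℤ and [μ]_{i₀} + k = [λ]_{i₁}, where [ν]_i := ν_i − 1 − i. -/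
/-- `α` is finitely supported with sum of parts equal to `d`. -/
def SumsTo (α : ℕ → ℕ) (d : ℕ) : Prop :=
  ∃ N, (∀ i, N ≤ i → α i = 0) ∧ ∑ i ∈ Finset.range N, α i = d

/-- The skew diagram `[λ/μ] = [λ] \ [μ]`. -/
def skewDiag (lam mu : ℕ → ℕ) : Set (ℕ × ℕ) :=
  {p | mu p.1 ≤ p.2 ∧ p.2 < lam p.1}

/-- `λ/μ` is a `k`-ribbon: it has `k` squares, and the diagonals `j - i = d`
meeting the skew diagram form a set of `k` consecutive integers. -/
def IsRibbon (k : ℕ) (lam mu : ℕ → ℕ) : Prop :=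
  SumsTo (fun i => lam i - mu i) k ∧
  ∃ d : ℤ, {z : ℤ | ∃ p ∈ skewDiag lam mu, (p.2 : ℤ) - p.1 = z} = Set.Ico d (d + k)

/-!
Row `i` of `λ/μ` occupies the diagonals `Ioc (beta μ i) (beta λ i)`. The skew shape is a ribbon
exactly when its nonempty rows form a range `a..b` in which consecutive rows share exactly one
column, i.e. `beta μ i = beta λ (i + 1)` for `a ≤ i < b`; the diagonals are then
`Ioc (beta μ b) (beta λ a)`, and deleting `beta μ b` and `beta λ a` from the two beta-sets
leaves equal sets. For a ribbon, the diagonals form an interval, which rules out a gap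
`beta λ (i + 1) < beta μ i`; comparing `k` cells with `k` diagonals by telescoping then rules
out overlaps as well. On the other side, two sets enumerated by strictly decreasing sequences are
equal iff the enumerations agree, which turns the set equality into the row conditions.
-/

open Set

lemma SumsTo.sum_eq {α : ℕ → ℕ} {k : ℕ} (h : SumsTo α k) (s : Finset ℕ)
    (hs : ∀ i ∉ s, α i = 0) : ∑ i ∈ s, α i = k := by
  obtain ⟨N, hN, rfl⟩ := h
  calc ∑ i ∈ s, α i = ∑ i ∈ s ∪ Finset.range N, α i :=
        Finset.sum_subset Finset.subset_union_left fun i _ hi => hs i hi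
    _ = ∑ i ∈ Finset.range N, α i :=
        (Finset.sum_subset Finset.subset_union_right fun i _ hi => hN i (by simpa using hi)).symm

lemma SumsTo.exists_support_bounds {α : ℕ → ℕ} {k : ℕ} (h : SumsTo α k) (hk : 0 < k) :
    ∃ a b, a ≤ b ∧ α a ≠ 0 ∧ α b ≠ 0 ∧ ∀ i, i < a ∨ b < i → α i = 0 := by
  obtain ⟨N, hN, hsum⟩ := h
  set S := (Finset.range N).filter (α · ≠ 0)
  have hS : ∀ i, i ∈ S ↔ α i ≠ 0 := fun i => by
    simp only [S, Finset.mem_filter, Finset.mem_range, and_iff_right_iff_imp]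
    exact fun hi => not_le.1 fun hNi => hi (hN i hNi)
  obtain ⟨i, -, hαi⟩ := Finset.exists_ne_zero_of_sum_ne_zero (hsum.trans_ne hk.ne')
  have hne : S.Nonempty := ⟨i, (hS i).2 hαi⟩
  refine ⟨S.min' hne, S.max' hne, S.min'_le_max' hne, (hS _).1 (S.min'_mem hne),
    (hS _).1 (S.max'_mem hne), fun j hj => not_not.1 fun hαj => ?_⟩
  have := S.min'_le j ((hS j).2 hαj)
  have := S.le_max' j ((hS j).2 hαj)
  omega

namespace Ribbon

def beta (ν : ℕ → ℕ) (i : ℕ) : ℤ := (ν i : ℤ) - 1 - i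

lemma beta_strictAnti {ν : ℕ → ℕ} (hν : Antitone ν) : StrictAnti (beta ν) :=
  strictAnti_nat_of_succ_lt fun i => by
    have := hν (Nat.le_add_right i 1)
    simp only [beta]
    push_cast
    omega

def diagonals (lam mu : ℕ → ℕ) : Set ℤ :=
  {z | ∃ p ∈ skewDiag lam mu, (p.2 : ℤ) - p.1 = z}

lemma diagonals_eq_iUnion (lam mu : ℕ → ℕ) :
    diagonals lam mu = ⋃ i, Ioc (beta mu i) (beta lam i) := by
  ext z
  simp only [diagonals, skewDiag, beta, mem_ofPred_eq, mem_iUnion, mem_Ioc, Prod.exists]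
  constructor
  · rintro ⟨i, c, ⟨h₁, h₂⟩, rfl⟩
    exact ⟨i, by omega, by omega⟩
  · rintro ⟨i, h₁, h₂⟩
    exact ⟨i, (z + i).toNat, ⟨by omega, by omega⟩, by omega⟩

def skip (a j : ℕ) : ℕ := if j < a then j else j + 1

lemma skip_strictMono (a : ℕ) : StrictMono (skip a) := by
  intro x y hxy
  simp only [skip]
  split <;> split <;> omega

lemma range_comp_skip {α : Type*} (f : ℕ → α) (a : ℕ) :
    range (f ∘ skip a) = {z | ∃ i, i ≠ a ∧ z = f i} := by
  ext z
  constructor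
  · rintro ⟨j, rfl⟩
    exact ⟨skip a j, by unfold skip; split <;> omega, rfl⟩
  · rintro ⟨i, hi, rfl⟩
    rcases lt_or_gt_of_ne hi with h | h
    · exact ⟨i, by simp [skip, h]⟩
    · refine ⟨i - 1, ?_⟩
      simp only [Function.comp_apply, skip]
      rw [if_neg (by omega), Nat.sub_add_cancel (by omega)]

lemma setOf_ne_eq_iff {f g : ℕ → ℤ} (hf : StrictAnti f) (hg : StrictAnti g) (a b : ℕ) :
    {z | ∃ i, i ≠ a ∧ z = f i} = {z | ∃ i, i ≠ b ∧ z = g i} ↔ f ∘ skip a = g ∘ skip b := by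
  rw [← range_comp_skip, ← range_comp_skip]
  exact (hf.comp_strictMono (skip_strictMono a)).dual_right.range_inj
    (hg.comp_strictMono (skip_strictMono b)).dual_right

lemma sum_Icc_sub_eq {M : Type*} [AddCommGroup M] (x y : ℕ → M) {a b : ℕ} (hab : a ≤ b) :
    ∑ i ∈ Finset.Icc a b, (y i - x i) = (y a - x b) + ∑ i ∈ Finset.Ico a b, (y (i + 1) - x i) := by
  induction b, hab using Nat.le_induction with
  | base => simp
  | succ b hab ih =>
    rw [Finset.sum_Icc_succ_top (by omega), Finset.sum_Ico_succ_top hab, ih]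
    abel

lemma eq_succ_of_sum_Icc_sub_eq {x y : ℕ → ℤ} {a b : ℕ} (hab : a ≤ b)
    (hsum : ∑ i ∈ Finset.Icc a b, (y i - x i) = y a - x b)
    (hle : ∀ i, a ≤ i → i < b → x i ≤ y (i + 1)) :
    ∀ i, a ≤ i → i < b → x i = y (i + 1) := by
  have hzero : ∑ i ∈ Finset.Ico a b, (y (i + 1) - x i) = 0 := by
    rw [sum_Icc_sub_eq x y hab] at hsum
    linarith
  intro i hai hib
  have := (Finset.sum_eq_zero_iff_of_nonneg fun j hj => ?_).1 hzero i (Finset.mem_Ico.2 ⟨hai, hib⟩)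
  · linarith
  · obtain ⟨h₁, h₂⟩ := Finset.mem_Ico.1 hj
    linarith [hle j h₁ h₂]

section

variable {lam mu : ℕ → ℕ} {a b : ℕ}

lemma iUnion_Ioc_beta_subset (hl : Antitone lam) (hm : Antitone mu)
    (hout : ∀ i, i < a ∨ b < i → lam i = mu i) :
    ⋃ i, Ioc (beta mu i) (beta lam i) ⊆ Ioc (beta mu b) (beta lam a) := by
  simp only [iUnion_subset_iff]
  intro i z ⟨h₁, h₂⟩
  by_cases hi : i < a ∨ b < i
  · simp only [beta, hout i hi] at h₁ h₂
    omega
  · exact ⟨(beta_strictAnti hm).antitone (by omega : i ≤ b) |>.trans_lt h₁,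
      h₂.trans ((beta_strictAnti hl).antitone (by omega : a ≤ i))⟩

lemma Ioc_subset_iUnion_Ioc_beta (hab : a ≤ b)
    (heq : ∀ i, a ≤ i → i < b → beta mu i = beta lam (i + 1)) :
    Ioc (beta mu b) (beta lam a) ⊆ ⋃ i, Ioc (beta mu i) (beta lam i) := by
  induction b, hab using Nat.le_induction with
  | base => exact subset_iUnion_of_subset a subset_rfl
  | succ b hab ih =>
    refine Ioc_subset_Ioc_union_Ioc.trans
      (union_subset (subset_iUnion_of_subset (b + 1) subset_rfl) ?_)
    rw [← heq b hab b.lt_succ_self]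
    exact ih fun i hai hib => heq i hai (hib.trans b.lt_succ_self)

lemma beta_le_beta_succ (hl : Antitone lam) (hm : Antitone mu) (ha : mu a < lam a)
    (hsup : Ioc (beta mu b) (beta lam a) ⊆ ⋃ j, Ioc (beta mu j) (beta lam j))
    {i : ℕ} (hai : a ≤ i) (hib : i < b) : beta mu i ≤ beta lam (i + 1) := by
  by_contra! hgap
  have hmem : beta mu i ∈ Ioc (beta mu b) (beta lam a) :=
    ⟨beta_strictAnti hm hib, (beta_strictAnti hm).antitone hai |>.trans
      (by simp only [beta]; omega)⟩
  obtain ⟨j, h₁, h₂⟩ := mem_iUnion.1 (hsup hmem)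
  rcases le_or_gt j i with hji | hij
  · exact h₁.not_ge ((beta_strictAnti hm).antitone hji)
  · exact h₂.not_gt (((beta_strictAnti hl).antitone hij).trans_lt hgap)

/-- `beta mu i = beta lam (i + 1)` says `mu i + 1 = lam (i + 1)`: rows `i` and `i + 1` share
exactly one column. -/
structure RibbonRows (lam mu : ℕ → ℕ) (a b : ℕ) : Prop where
  le : a ≤ b
  eq_of_lt_or_lt : ∀ i, i < a ∨ b < i → lam i = mu i
  beta_eq : ∀ i, a ≤ i → i < b → beta mu i = beta lam (i + 1)

lemma RibbonRows.diagonals_eq (h : RibbonRows lam mu a b) (hl : Antitone lam) (hm : Antitone mu) :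
    diagonals lam mu = Ioc (beta mu b) (beta lam a) := by
  rw [diagonals_eq_iUnion]
  exact (iUnion_Ioc_beta_subset hl hm h.eq_of_lt_or_lt).antisymm
    (Ioc_subset_iUnion_Ioc_beta h.le h.beta_eq)

lemma ribbonRows_iff (hsub : ∀ i, mu i ≤ lam i) (hm : Antitone mu) :
    RibbonRows lam mu a b ↔ beta mu ∘ skip b = beta lam ∘ skip a := by
  constructor
  · intro h
    funext j
    simp only [Function.comp_apply, skip]
    by_cases hja : j < a
    · rw [if_pos (hja.trans_le h.le), if_pos hja, beta, beta, h.eq_of_lt_or_lt j (Or.inl hja)]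
    by_cases hjb : j < b
    · rw [if_pos hjb, if_neg hja, h.beta_eq j (not_lt.1 hja) hjb]
    · rw [if_neg hjb, if_neg hja, beta, beta, h.eq_of_lt_or_lt (j + 1) (Or.inr (by omega))]
  · intro h
    have hskip (j : ℕ) : beta mu (skip b j) = beta lam (skip a j) := congrFun h j
    have hab : a ≤ b := by
      by_contra! hba
      have hb := hskip b
      simp only [skip, lt_irrefl, if_false, if_pos hba] at hb
      have hstep := beta_strictAnti hm (Nat.lt_add_one b)
      have hsubb := hsub b
      simp only [beta] at hb hstep
      omega
    refine ⟨hab, fun i hi => ?_, fun i hai hib => ?_⟩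
    · rcases hi with hia | hbi
      · have hi := hskip i
        simp only [skip, if_pos hia, if_pos (hia.trans_le hab), beta] at hi
        omega
      · have hi := hskip (i - 1)
        simp only [skip, if_neg (show ¬i - 1 < b by omega), if_neg (show ¬i - 1 < a by omega),
          Nat.sub_add_cancel (show 1 ≤ i by omega), beta] at hi
        omega
    · simpa only [skip, if_pos hib, if_neg (not_lt.2 hai)] using hskip i

lemma isRibbon_of_ribbonRows {k : ℕ} (hl : Antitone lam) (hm : Antitone mu)
    (h : RibbonRows lam mu a b) (hk : beta mu b + k = beta lam a)
    (hsize : SumsTo (fun i => lam i - mu i) k) : IsRibbon k lam mu := by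
  refine ⟨hsize, beta mu b + 1, ?_⟩
  change diagonals lam mu = _
  rw [h.diagonals_eq hl hm, ← hk, ← Ico_add_one_add_one_eq_Ioc, add_right_comm]

lemma exists_ribbonRows_of_isRibbon {k : ℕ} (hk : 0 < k) (hl : Antitone lam) (hm : Antitone mu)
    (hsub : ∀ i, mu i ≤ lam i) (h : IsRibbon k lam mu) :
    ∃ a b, RibbonRows lam mu a b ∧ beta mu b + k = beta lam a := by
  have hsize : SumsTo (fun i => lam i - mu i) k := h.1
  obtain ⟨d, hd⟩ := h.2
  obtain ⟨a, b, hab, ha, hb, hout⟩ := hsize.exists_support_bounds hk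
  replace ha : mu a < lam a := Nat.sub_ne_zero_iff_lt.1 ha
  replace hb : mu b < lam b := Nat.sub_ne_zero_iff_lt.1 hb
  replace hout (i : ℕ) (hi : i < a ∨ b < i) : lam i = mu i :=
    (Nat.sub_eq_zero_iff_le.1 (hout i hi)).antisymm (hsub i)
  have hdiag : ⋃ i, Ioc (beta mu i) (beta lam i) = Ico d (d + k) := by
    rw [← diagonals_eq_iUnion]
    exact hd
  have hsup : Ioc (beta mu b) (beta lam a) ⊆ ⋃ i, Ioc (beta mu i) (beta lam i) := by
    have hconn : (⋃ i, Ioc (beta mu i) (beta lam i)).OrdConnected := hdiag ▸ ordConnected_Ico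
    intro z hz
    refine hconn.out (mem_iUnion.2 ⟨b, lt_add_one _, ?_⟩) (mem_iUnion.2 ⟨a, ?_, le_rfl⟩)
      ⟨by linarith [hz.1], hz.2⟩ <;>
    · simp only [beta]
      omega
  have hcount : beta lam a = beta mu b + k := by
    rw [(iUnion_Ioc_beta_subset hl hm hout).antisymm hsup, ← Ico_add_one_add_one_eq_Ioc,
      Ico_eq_Ico_iff (Or.inr (by omega))] at hdiag
    omega
  have hsum : ∑ i ∈ Finset.Icc a b, (beta lam i - beta mu i) = beta lam a - beta mu b := by
    have hnat := hsize.sum_eq (Finset.Icc a b) fun i hi =>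
      Nat.sub_eq_zero_of_le (hout i (by rw [Finset.mem_Icc] at hi; omega)).le
    calc ∑ i ∈ Finset.Icc a b, (beta lam i - beta mu i)
        = ∑ i ∈ Finset.Icc a b, ((lam i - mu i : ℕ) : ℤ) :=
          Finset.sum_congr rfl fun i _ => by simp only [beta, Nat.cast_sub (hsub i)]; ring
      _ = beta lam a - beta mu b := by rw [← Nat.cast_sum, hnat, hcount]; ring
  exact ⟨a, b, ⟨hab, hout, eq_succ_of_sum_Icc_sub_eq hab hsum
    fun i hai hib => beta_le_beta_succ hl hm ha hsup hai hib⟩, hcount.symm⟩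

end

end Ribbon

open Ribbon

theorem ribbon_characterization (k : ℕ) (hk : 0 < k) (lam mu : ℕ → ℕ)
    (hl : IsPartition lam) (hm : IsPartition mu) (hsub : ∀ i, mu i ≤ lam i)
    (hsize : SumsTo (fun i => lam i - mu i) k) :
    IsRibbon k lam mu ↔
      ∃ i₀ i₁ : ℕ,
        {z : ℤ | ∃ i : ℕ, i ≠ i₀ ∧ z = (mu i : ℤ) - 1 - i} =
          {z : ℤ | ∃ i : ℕ, i ≠ i₁ ∧ z = (lam i : ℤ) - 1 - i} ∧
        ((mu i₀ : ℤ) - 1 - i₀) + k = (lam i₁ : ℤ) - 1 - i₁ := by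
  have hl' := antitone_nat_of_succ_le hl.1
  have hm' := antitone_nat_of_succ_le hm.1
  have hrows : ∀ a b, RibbonRows lam mu a b ↔
      {z : ℤ | ∃ i : ℕ, i ≠ b ∧ z = beta mu i} = {z : ℤ | ∃ i : ℕ, i ≠ a ∧ z = beta lam i} :=
    fun a b => (ribbonRows_iff hsub hm').trans
      (setOf_ne_eq_iff (beta_strictAnti hm') (beta_strictAnti hl') b a).symm
  constructor
  · intro h
    obtain ⟨a, b, hr, hba⟩ := exists_ribbonRows_of_isRibbon hk hl' hm' hsub h
    exact ⟨b, a, (hrows a b).1 hr, hba⟩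
  · rintro ⟨i₀, i₁, hset, hba⟩
    exact isRibbon_of_ribbonRows hl' hm' ((hrows i₁ i₀).2 hset) hba hsize
end

section
/- If λ/μ is a k-ribbon with the indices i₀, i₁ as in the characterization ({[μ]_i : i ≠ i₀} = {[λ]_i : i ≠ i₁}, [μ]_{i₀} + k = [λ]_{i₁}), then the height of the ribbon, defined as the difference between the row indices of the squares of [λ/μ] on its first and last diagonal, equals i₀ − i₁. -/
/-- The `ℕ`-analogue of `Fin.succAbove`: the increasing enumeration of `ℕ \ {a}`. -/
def succAbove (a j : ℕ) : ℕ := if j < a then j else j + 1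

theorem succAbove_of_lt {a j : ℕ} (h : j < a) : succAbove a j = j := if_pos h

theorem succAbove_of_le {a j : ℕ} (h : a ≤ j) : succAbove a j = j + 1 := if_neg (not_lt.2 h)

theorem succAbove_strictMono (a : ℕ) : StrictMono (succAbove a) := by
  intro i j hij
  unfold succAbove
  split_ifs <;> omega

theorem range_succAbove (a : ℕ) : Set.range (succAbove a) = {a}ᶜ := by
  ext i
  simp only [Set.mem_range, Set.mem_compl_singleton_iff]
  constructor
  · rintro ⟨j, rfl⟩
    unfold succAbove
    split_ifs <;> omega
  · intro hi
    rcases lt_or_gt_of_ne hi with h | h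
    · exact ⟨i, succAbove_of_lt h⟩
    · exact ⟨i - 1, by rw [succAbove_of_le (by omega)]; omega⟩

theorem StrictAnti.eq_of_range_eq {β γ : Type*} [LinearOrder β] [WellFoundedLT β] [Preorder γ]
    {f g : β → γ} (hf : StrictAnti f) (hg : StrictAnti g) (h : Set.range f = Set.range g) : f = g :=
  funext fun n => congrFun ((hf.dual_right.range_inj hg.dual_right).1 h) n

theorem IsPartition.antitone {f : ℕ → ℕ} (hf : IsPartition f) : Antitone f :=
  antitone_nat_of_succ_le hf.1

/-- The paper's `[ν]_i`. -/
def shifted (ν : ℕ → ℕ) (i : ℕ) : ℤ := (ν i : ℤ) - 1 - i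

theorem Antitone.strictAnti_shifted {ν : ℕ → ℕ} (hν : Antitone ν) : StrictAnti (shifted ν) := by
  intro a b hab
  have := hν hab.le
  unfold shifted
  omega

theorem shifted_succAbove_eq {lam mu : ℕ → ℕ} {i₀ i₁ : ℕ} (hl : Antitone lam)
    (hm : Antitone mu) (h : shifted mu '' {i₀}ᶜ = shifted lam '' {i₁}ᶜ) (j : ℕ) :
    shifted mu (succAbove i₀ j) = shifted lam (succAbove i₁ j) := by
  rw [← range_succAbove, ← range_succAbove, ← Set.range_comp, ← Set.range_comp] at h
  exact congrFun ((hm.strictAnti_shifted.comp_strictMono (succAbove_strictMono i₀)).eq_of_range_eq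
    (hl.strictAnti_shifted.comp_strictMono (succAbove_strictMono i₁)) h) j

/-- `λ/μ` lies in the rows `i₁, …, i₀`, and row `i + 1` ends in the column where row `i` starts. -/
structure IsRibbonRows (lam mu : ℕ → ℕ) (i₁ i₀ : ℕ) : Prop where
  eq_of_lt : ∀ i < i₁, lam i = mu i
  eq_of_gt : ∀ i, i₀ < i → lam i = mu i
  succ_eq : ∀ i, i₁ ≤ i → i < i₀ → lam (i + 1) = mu i + 1

section ShiftedEq

variable {lam mu : ℕ → ℕ} {i₀ i₁ : ℕ}
  (h : ∀ j, shifted mu (succAbove i₀ j) = shifted lam (succAbove i₁ j))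
include h

theorem le_of_shifted_succAbove_eq (hm : Antitone mu) (hsub : ∀ i, mu i ≤ lam i) : i₁ ≤ i₀ := by
  by_contra! hlt
  have hi₀ := h i₀
  rw [succAbove_of_le le_rfl, succAbove_of_lt hlt] at hi₀
  have := hm (Nat.le_add_right i₀ 1)
  have := hsub i₀
  unfold shifted at hi₀
  omega

theorem isRibbonRows_of_shifted_succAbove_eq (hle : i₁ ≤ i₀) : IsRibbonRows lam mu i₁ i₀ where
  eq_of_lt i hi := by
    have hi' := h i
    rw [succAbove_of_lt (by omega), succAbove_of_lt hi] at hi'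
    unfold shifted at hi'
    omega
  eq_of_gt i hi := by
    obtain ⟨j, rfl⟩ : ∃ j, i = j + 1 := ⟨i - 1, by omega⟩
    have hi' := h j
    rw [succAbove_of_le (by omega), succAbove_of_le (by omega)] at hi'
    unfold shifted at hi'
    omega
  succ_eq i hi₁ hi₀ := by
    have hi' := h i
    rw [succAbove_of_lt hi₀, succAbove_of_le hi₁] at hi'
    unfold shifted at hi'
    omega

end ShiftedEq

namespace IsRibbonRows

variable {lam mu : ℕ → ℕ} {i₀ i₁ : ℕ} (h : IsRibbonRows lam mu i₁ i₀) {p : ℕ × ℕ}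
  (hp : p ∈ skewDiag lam mu)
include h hp

theorem row_le : p.1 ≤ i₀ := by
  by_contra! hlt
  obtain ⟨hleft, hright⟩ := hp
  have := h.eq_of_gt p.1 hlt
  omega

theorem le_row : i₁ ≤ p.1 := by
  by_contra! hlt
  obtain ⟨hleft, hright⟩ := hp
  have := h.eq_of_lt p.1 hlt
  omega

theorem row_eq_of_diag_min (hm : Antitone mu)
    (hmin : ∀ r ∈ skewDiag lam mu, (p.2 : ℤ) - p.1 ≤ (r.2 : ℤ) - r.1) : p.1 = i₀ := by
  refine le_antisymm (h.row_le hp) (not_lt.1 fun hlt => ?_)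
  have hlink := h.succ_eq p.1 (h.le_row hp) hlt
  have hdec := hm (Nat.le_add_right p.1 1)
  -- the first square of the next row lies on a lower diagonal
  have hmem : (p.1 + 1, mu (p.1 + 1)) ∈ skewDiag lam mu := by
    show mu (p.1 + 1) ≤ mu (p.1 + 1) ∧ mu (p.1 + 1) < lam (p.1 + 1)
    omega
  have := hmin _ hmem
  have := hp.1
  omega

theorem row_eq_of_diag_max (hl : Antitone lam)
    (hmax : ∀ r ∈ skewDiag lam mu, (r.2 : ℤ) - r.1 ≤ (p.2 : ℤ) - p.1) : p.1 = i₁ := by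
  refine le_antisymm (not_lt.1 fun hlt => ?_) (h.le_row hp)
  obtain ⟨i, hi⟩ : ∃ i, p.1 = i + 1 := ⟨p.1 - 1, by omega⟩
  have hlink := h.succ_eq i (by omega) (by have := h.row_le hp; omega)
  have hdec := hl (Nat.le_add_right i 1)
  -- the last square of the previous row lies on a higher diagonal
  have hmem : (i, lam i - 1) ∈ skewDiag lam mu := by
    show mu i ≤ lam i - 1 ∧ lam i - 1 < lam i
    omega
  have := hmax _ hmem
  have : p.2 < lam (i + 1) := hi ▸ hp.2
  omega

end IsRibbonRows

theorem ribbon_height_general (i₀ i₁ : ℕ) (lam mu : ℕ → ℕ)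
    (hl : IsPartition lam) (hm : IsPartition mu) (hsub : ∀ i, mu i ≤ lam i)
    (hsets : {z : ℤ | ∃ i : ℕ, i ≠ i₀ ∧ z = (mu i : ℤ) - 1 - i} =
      {z : ℤ | ∃ i : ℕ, i ≠ i₁ ∧ z = (lam i : ℤ) - 1 - i})
    (p q : ℕ × ℕ) (hp : p ∈ skewDiag lam mu) (hq : q ∈ skewDiag lam mu)
    (hpmin : ∀ r ∈ skewDiag lam mu, (p.2 : ℤ) - p.1 ≤ (r.2 : ℤ) - r.1)
    (hqmax : ∀ r ∈ skewDiag lam mu, (r.2 : ℤ) - r.1 ≤ (q.2 : ℤ) - q.1) :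
    (p.1 : ℤ) - q.1 = (i₀ : ℤ) - i₁ := by
  have himage : shifted mu '' {i₀}ᶜ = shifted lam '' {i₁}ᶜ := by
    ext z
    simpa [shifted, eq_comm] using Set.ext_iff.1 hsets z
  have hshift := shifted_succAbove_eq hl.antitone hm.antitone himage
  have hrows := isRibbonRows_of_shifted_succAbove_eq hshift
    (le_of_shifted_succAbove_eq hshift hm.antitone hsub)
  rw [hrows.row_eq_of_diag_min hp hm.antitone hpmin, hrows.row_eq_of_diag_max hq hl.antitone hqmax]

/-- The height of the ribbon (difference of the row coordinates of the squares on
the first and last occupied diagonals) equals `i₀ - i₁`. -/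
theorem ribbon_height (k i₀ i₁ : ℕ) (hk : 0 < k) (lam mu : ℕ → ℕ)
    (hl : IsPartition lam) (hm : IsPartition mu) (hsub : ∀ i, mu i ≤ lam i)
    (hrib : IsRibbon k lam mu)
    (hsets : {z : ℤ | ∃ i : ℕ, i ≠ i₀ ∧ z = (mu i : ℤ) - 1 - i} =
      {z : ℤ | ∃ i : ℕ, i ≠ i₁ ∧ z = (lam i : ℤ) - 1 - i})
    (hjump : ((mu i₀ : ℤ) - 1 - i₀) + k = (lam i₁ : ℤ) - 1 - i₁)
    (p q : ℕ × ℕ) (hp : p ∈ skewDiag lam mu) (hq : q ∈ skewDiag lam mu)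
    (hpmin : ∀ r ∈ skewDiag lam mu, (p.2 : ℤ) - p.1 ≤ (r.2 : ℤ) - r.1)
    (hqmax : ∀ r ∈ skewDiag lam mu, (r.2 : ℤ) - r.1 ≤ (q.2 : ℤ) - q.1) :
    (p.1 : ℤ) - q.1 = (i₀ : ℤ) - i₁ :=
  ribbon_height_general i₀ i₁ lam mu hl hm hsub hsets p q hp hq hpmin hqmax
end

section
/- For any composition β, the coefficient of X^α in the product h_β = Π_i h_{β_i} equals the number of finitely supported ℕ-valued matrices M with row sums α and column sums β. -/
open scoped Classical

/-- The complete homogeneous symmetric function `h_d` in variables `X_0, X_1, …`,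
as a power series: the sum of all monomials `X^α` over compositions `α` of `d`. -/
noncomputable def hsym (d : ℕ) : MvPowerSeries ℕ ℤ := fun m =>
  if m.sum (fun _ k => k) = d then 1 else 0

/-!
Expanding the product, the coefficient of `X^α` in `h_{β_0} ⋯ h_{β_{N-1}}` counts the families
`(l_j)_{j < N}` of exponent vectors with `∑ j, l_j = α` and `|l_j| = β_j`. Reading `l_j` as the
`j`-th row of a matrix, these are the matrices with row sums `β` and column sums `α`, and
transposition turns them into the matrices with row sums `α` and column sums `β`.
-/

namespace Finsupp

variable {ι κ R : Type*} [AddCommMonoid R]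

noncomputable def transposeEquiv : (ι →₀ κ →₀ R) ≃ (κ →₀ ι →₀ R) :=
  curryEquiv.symm.trans ((Finsupp.domCongr (Equiv.prodComm ι κ)).toEquiv.trans curryEquiv)

@[simp]
lemma transposeEquiv_apply_apply (M : ι →₀ κ →₀ R) (j : κ) (i : ι) :
    transposeEquiv M j i = M i j := by
  simp [transposeEquiv]

@[simp]
lemma transposeEquiv_transposeEquiv (M : ι →₀ κ →₀ R) :
    transposeEquiv (transposeEquiv M) = M := by
  ext i j
  simp

lemma sum_transposeEquiv_apply (M : ι →₀ κ →₀ R) (j : κ) :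
    (transposeEquiv M j).sum (fun _ r => r) = M.sum (fun _ m => m j) := by
  rw [sum_of_support_subset _ Finset.subset_union_left _ fun _ _ => rfl,
    sum_of_support_subset M Finset.subset_union_right _ fun _ _ => rfl]
  exact Finset.sum_congr rfl fun i _ => transposeEquiv_apply_apply M j i

def marginMatrices (r : ι → ℕ) (c : κ → ℕ) : Set (ι →₀ κ →₀ ℕ) :=
  {M | (∀ i, (M i).sum (fun _ k => k) = r i) ∧ ∀ j, M.sum (fun _ m => m j) = c j}

lemma transposeEquiv_mem_marginMatrices_iff {r : ι → ℕ} {c : κ → ℕ} {M : ι →₀ κ →₀ ℕ} :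
    transposeEquiv M ∈ marginMatrices c r ↔ M ∈ marginMatrices r c := by
  have col_sum_transpose (i : ι) :
      (transposeEquiv M).sum (fun _ m => m i) = (M i).sum (fun _ k => k) := by
    rw [← sum_transposeEquiv_apply, transposeEquiv_transposeEquiv]
  simp only [marginMatrices, Set.mem_ofPred_eq, sum_transposeEquiv_apply, col_sum_transpose]
  exact and_comm

lemma ncard_marginMatrices_comm (r : ι → ℕ) (c : κ → ℕ) :
    (marginMatrices c r).ncard = (marginMatrices r c).ncard := by
  have : marginMatrices r c = transposeEquiv ⁻¹' marginMatrices c r :=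
    Set.ext fun _ => transposeEquiv_mem_marginMatrices_iff.symm
  rw [this, ← Equiv.image_symm_eq_preimage, Set.ncard_image_of_injective _ (Equiv.injective _)]

end Finsupp

open Finset Finsupp

lemma coeff_hsym (d : ℕ) (m : ℕ →₀ ℕ) :
    MvPowerSeries.coeff m (hsym d) = if m.sum (fun _ k => k) = d then 1 else 0 :=
  rfl

lemma coeff_prod_hsym (s : Finset ℕ) (β : ℕ → ℕ) (α : ℕ →₀ ℕ) :
    MvPowerSeries.coeff α (∏ j ∈ s, hsym (β j)) =
      #{l ∈ s.finsuppAntidiag α | ∀ j ∈ s, (l j).sum (fun _ k => k) = β j} := by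
  rw [MvPowerSeries.coeff_prod]
  simp_rw [coeff_hsym, prod_boole, sum_boole]

lemma coe_filter_finsuppAntidiag_eq_marginMatrices {ι κ : Type*} [DecidableEq ι] [DecidableEq κ]
    {s : Finset κ} {β : κ → ℕ} (hβ : ∀ j ∉ s, β j = 0) (α : ι →₀ ℕ) :
    (({l ∈ s.finsuppAntidiag α | ∀ j ∈ s, (l j).sum (fun _ k => k) = β j} :
      Finset (κ →₀ ι →₀ ℕ)) : Set (κ →₀ ι →₀ ℕ)) = marginMatrices β α := by
  ext l
  simp only [coe_filter, mem_finsuppAntidiag, marginMatrices, Set.mem_ofPred_eq]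
  constructor
  · rintro ⟨⟨hsum, hsupp⟩, hrow⟩
    refine ⟨fun j => ?_, fun i => ?_⟩
    · by_cases hj : j ∈ s
      · exact hrow j hj
      · rw [hβ j hj, notMem_support_iff.mp fun h => hj (hsupp h), sum_zero_index]
    · rw [← hsum, Finset.sum_apply', sum_of_support_subset _ hsupp _ fun _ _ => rfl]
  · rintro ⟨hrow, hcol⟩
    have hsupp : l.support ⊆ s := fun j hj => by
      by_contra hjs
      exact mem_support_iff.mp hj ((degree_eq_zero_iff _).mp ((hrow j).trans (hβ j hjs)))
    refine ⟨⟨?_, hsupp⟩, fun j _ => hrow j⟩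
    ext i
    rw [Finset.sum_apply', ← hcol i, sum_of_support_subset _ hsupp _ fun _ _ => rfl]

theorem coeff_hsym_prod_eq_card_matrices (β : ℕ → ℕ) (N : ℕ)
    (hβ : ∀ i, N ≤ i → β i = 0) (α : ℕ →₀ ℕ) :
    MvPowerSeries.coeff (R := ℤ) α (∏ i ∈ Finset.range N, hsym (β i)) =
      ({M : ℕ →₀ (ℕ →₀ ℕ) |
          (∀ i, (M i).sum (fun _ k => k) = α i) ∧
          (∀ j, M.sum (fun _ r => r j) = β j)}.ncard : ℤ) := by
  have hβ' : ∀ j ∉ range N, β j = 0 := fun j hj => hβ j (by simpa using hj)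
  rw [coeff_prod_hsym, ← Set.ncard_coe_finset,
    coe_filter_finsuppAntidiag_eq_marginMatrices hβ', ncard_marginMatrices_comm]
  rfl
end

section
/- For a composition α ∈ ℕⁿ, the alternant a_α = det(X_i^{α_j})_{i,j<n} is zero if α is fixed by some transposition (i.e., has a repeated entry), and otherwise a_α = sign(σ)·a_{α⁺·ordered} where σ sorts α into strictly decreasing order; consequently the polynomials a_{λ+δ} for partitions λ with at most n parts, where δ = (n−1, n−2, …, 1, 0), form a ℤ-basis of the group of alternating polynomials in n variables. -/
/-!
Expanding the determinant gives `a_α = ∑_σ sign σ • X^(α ∘ σ)`, so for strictly decreasing `α`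
and `β` the coefficient of `X^β` in `a_α` is `1` if `α = β` and `0` otherwise. An alternating
polynomial `p` satisfies `coeff (d ∘ σ) p = sign σ * coeff d p`; hence its coefficients vanish at
exponents with a repeated entry and are determined by those at strictly decreasing exponents,
which are exactly the `λ + δ` with `λ` a partition (an antitone `Fin n → ℕ`). So
`p - ∑_λ coeff_{λ+δ}(p) • a_{λ+δ}` is alternating with all these coefficients zero, hence zero,
and reading off the coefficient of `X^(λ+δ)` gives uniqueness.
-/

/-- `p` is an alternating polynomial. -/
def IsAlternatingPoly (n : ℕ) (p : MvPolynomial (Fin n) ℤ) : Prop :=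
  ∀ σ : Equiv.Perm (Fin n),
    MvPolynomial.rename σ p = (Equiv.Perm.sign σ : ℤ) • p

/-- The alternant `a_α = det(X_i^{α_j})_{i,j<n}`. -/
noncomputable def alternant (n : ℕ) (α : Fin n → ℕ) : MvPolynomial (Fin n) ℤ :=
  Matrix.det (Matrix.of fun i j : Fin n =>
    (MvPolynomial.X i : MvPolynomial (Fin n) ℤ) ^ α j)

open MvPolynomial Equiv Finset

section

variable {n : ℕ}

theorem Equiv.Perm.eq_one_of_strictAnti_comp {ι α : Type*} [LinearOrder ι] [Finite ι]
    [LinearOrder α] {f : ι → α} {σ : Perm ι} (hf : StrictAnti f) (hfσ : StrictAnti (f ∘ σ)) : σ = 1 :=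
  Equiv.ext fun _ => StrictMono.apply_eq fun _ _ hij => hf.lt_iff_gt.mp (hfσ hij)

theorem exists_perm_strictAnti_comp {α : Type*} [LinearOrder α] {f : Fin n → α}
    (hf : Function.Injective f) : ∃ σ : Perm (Fin n), StrictAnti (f ∘ σ) := by
  refine ⟨Fin.revPerm.trans (Tuple.sort f), ?_⟩
  have hsort : StrictMono (f ∘ Tuple.sort f) :=
    (Tuple.monotone_sort f).strictMono_of_injective (hf.comp (Tuple.sort f).injective)
  exact hsort.comp_strictAnti fun _ _ => Fin.rev_lt_rev.mpr

theorem StrictAnti.sub_add_le {β : Fin n → ℕ} (hβ : StrictAnti β) {i j : Fin n} (hij : i ≤ j) :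
    ((j : ℕ) - i) + β j ≤ β i := by
  have hcard : #(Icc i j) ≤ #(Icc (β j) (β i)) :=
    card_le_card_of_injOn β (fun k hk => by
      simp only [coe_Icc, Set.mem_Icc] at hk ⊢
      exact ⟨hβ.antitone hk.2, hβ.antitone hk.1⟩) hβ.injective.injOn
  rw [Fin.card_Icc, Nat.card_Icc] at hcard
  have := hβ.antitone hij
  omega

def staircase (n : ℕ) : Fin n → ℕ := fun i => n - 1 - i

theorem Antitone.strictAnti_add_staircase {lam : Fin n → ℕ} (h : Antitone lam) :
    StrictAnti (lam + staircase n) := fun i j hij => by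
  have := h hij.le
  have : (i : ℕ) < j := hij
  simp only [Pi.add_apply, staircase]
  omega

theorem StrictAnti.exists_antitone_add_staircase {β : Fin n → ℕ} (hβ : StrictAnti β) :
    ∃ lam : Fin n → ℕ, Antitone lam ∧ β = lam + staircase n := by
  have hδ : ∀ i : Fin n, staircase n i ≤ β i := fun i => by
    have := hβ.sub_add_le (i := i) (j := ⟨n - 1, by have := i.isLt; omega⟩)
      (Fin.le_def.mpr (by have := i.isLt; simp; omega))
    simp only [staircase]
    simp only at this
    omega
  refine ⟨β - staircase n, fun i j hij => ?_, ?_⟩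
  · have := hβ.sub_add_le hij
    simp only [Pi.sub_apply, staircase]
    omega
  · ext i
    simp only [Pi.add_apply, Pi.sub_apply]
    have := hδ i
    omega

theorem alternant_comp_perm (α : Fin n → ℕ) (σ : Perm (Fin n)) :
    alternant n (α ∘ σ) = (Perm.sign σ : ℤ) • alternant n α := by
  rw [alternant, alternant, zsmul_eq_mul, ← Matrix.det_permute']
  rfl

theorem alternant_eq_zero_of_apply_eq {α : Fin n → ℕ} {j k : Fin n} (hjk : j ≠ k)
    (h : α j = α k) : alternant n α = 0 :=
  Matrix.det_zero_of_column_eq hjk fun i => by simp [h]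

theorem rename_alternant (σ : Perm (Fin n)) (α : Fin n → ℕ) :
    rename σ (alternant n α) = (Perm.sign σ : ℤ) • alternant n α := by
  rw [alternant, AlgHom.map_det, zsmul_eq_mul, ← Matrix.det_permute]
  congr 1
  ext i j
  simp

theorem alternant_eq_sum_monomial (α : Fin n → ℕ) :
    alternant n α = ∑ σ : Perm (Fin n),
      (Perm.sign σ : ℤ) • monomial (Finsupp.equivFunOnFinite.symm (α ∘ σ)) 1 := by
  rw [alternant, ← Matrix.det_transpose, Matrix.det_apply]
  refine sum_congr rfl fun σ _ => ?_
  rw [monomial_eq, C_1, one_mul, Finsupp.prod_pow]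
  simp [Units.smul_def]

theorem coeff_alternant_of_strictAnti {α : Fin n → ℕ} (hα : StrictAnti α) {d : Fin n →₀ ℕ}
    (hd : StrictAnti d) : coeff d (alternant n α) = if ⇑d = α then 1 else 0 := by
  have hexp (β : Fin n → ℕ) : Finsupp.equivFunOnFinite.symm β = d ↔ ⇑d = β := by
    rw [Equiv.symm_apply_eq, eq_comm]
    rfl
  rw [alternant_eq_sum_monomial, coeff_sum, sum_eq_single 1]
  · simp only [coeff_monomial, hexp, Perm.coe_one, Function.comp_id, Perm.sign_one,
      Units.val_one, one_smul]
  · intro σ _ hσ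
    rw [coeff_smul, coeff_monomial, if_neg fun h => hσ ?_, smul_zero]
    exact Perm.eq_one_of_strictAnti_comp hα ((hexp _).mp h ▸ hd)
  · simp

namespace IsAlternatingPoly

variable {p : MvPolynomial (Fin n) ℤ}

theorem coeff_eq_sign_mul_coeff_mapDomain (hp : IsAlternatingPoly n p) (σ : Perm (Fin n))
    (d : Fin n →₀ ℕ) : coeff d p = (Perm.sign σ : ℤ) * coeff (d.mapDomain σ) p := by
  rw [← coeff_rename_mapDomain σ σ.injective p d, hp σ, coeff_smul, smul_eq_mul]

theorem coeff_eq_zero_of_not_injective (hp : IsAlternatingPoly n p) {d : Fin n →₀ ℕ}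
    (hd : ¬ Function.Injective d) : coeff d p = 0 := by
  obtain ⟨a, b, hab, hne⟩ : ∃ a b, d a = d b ∧ a ≠ b := by
    simpa [Function.Injective] using hd
  have hswap : d.mapDomain (swap a b) = d := by
    ext i
    rw [Finsupp.mapDomain_equiv_apply, symm_swap, swap_apply_def]
    split_ifs <;> simp_all
  have := hp.coeff_eq_sign_mul_coeff_mapDomain (swap a b) d
  rw [hswap, Perm.sign_swap hne] at this
  simp only [Units.val_neg, Units.val_one, neg_mul, one_mul] at this
  omega

theorem eq_zero_of_coeff_strictAnti (hp : IsAlternatingPoly n p)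
    (h : ∀ d : Fin n →₀ ℕ, StrictAnti d → coeff d p = 0) : p = 0 := by
  ext d
  rw [coeff_zero]
  by_cases hd : Function.Injective d
  · obtain ⟨σ, hσ⟩ := exists_perm_strictAnti_comp hd
    have hsorted : ⇑(d.mapDomain σ.symm) = d ∘ σ := by
      ext i
      rw [Finsupp.mapDomain_equiv_apply]
      rfl
    rw [hp.coeff_eq_sign_mul_coeff_mapDomain σ.symm d, h _ (hsorted ▸ hσ), mul_zero]
  · exact hp.coeff_eq_zero_of_not_injective hd

end IsAlternatingPoly

def alternatingSubmodule (n : ℕ) : Submodule ℤ (MvPolynomial (Fin n) ℤ) where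
  carrier := {p | IsAlternatingPoly n p}
  add_mem' hp hq σ := by rw [map_add, hp σ, hq σ, smul_add]
  zero_mem' σ := by rw [map_zero, smul_zero]
  smul_mem' c p hp σ := by rw [map_zsmul, hp σ, smul_comm]

theorem mem_alternatingSubmodule {p : MvPolynomial (Fin n) ℤ} :
    p ∈ alternatingSubmodule n ↔ IsAlternatingPoly n p :=
  Iff.rfl

noncomputable def shiftedExponent (lam : {lam : Fin n → ℕ // Antitone lam}) : Fin n →₀ ℕ :=
  Finsupp.equivFunOnFinite.symm (lam.1 + staircase n)

theorem shiftedExponent_injective : Function.Injective (shiftedExponent (n := n)) :=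
  Finsupp.equivFunOnFinite.symm.injective.comp <|
    (add_left_injective (staircase n)).comp Subtype.val_injective

theorem strictAnti_shiftedExponent (lam : {lam : Fin n → ℕ // Antitone lam}) :
    StrictAnti (shiftedExponent lam) :=
  lam.2.strictAnti_add_staircase

noncomputable def sumAlternant (c : {lam : Fin n → ℕ // Antitone lam} →₀ ℤ) :
    MvPolynomial (Fin n) ℤ :=
  c.sum fun lam z => z • alternant n (lam.1 + staircase n)

theorem sumAlternant_mem_alternatingSubmodule (c : {lam : Fin n → ℕ // Antitone lam} →₀ ℤ) :
    sumAlternant c ∈ alternatingSubmodule n :=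
  Submodule.finsuppSum_mem _ _ _ _ fun _ _ =>
    Submodule.smul_mem _ _ fun σ => rename_alternant σ _

theorem coeff_sumAlternant (c : {lam : Fin n → ℕ // Antitone lam} →₀ ℤ)
    (lam : {lam : Fin n → ℕ // Antitone lam}) :
    coeff (shiftedExponent lam) (sumAlternant c) = c lam := by
  have hcoeff (μ : {lam : Fin n → ℕ // Antitone lam}) :
      coeff (shiftedExponent lam) (alternant n (μ.1 + staircase n)) = if μ = lam then 1 else 0 := by
    rw [coeff_alternant_of_strictAnti μ.2.strictAnti_add_staircase (strictAnti_shiftedExponent lam)]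
    exact if_congr ⟨fun h => shiftedExponent_injective (DFunLike.coe_injective h).symm,
      fun h => h ▸ rfl⟩ rfl rfl
  simp only [sumAlternant, Finsupp.sum, coeff_sum, coeff_smul, hcoeff, smul_eq_mul, mul_ite,
    mul_one, mul_zero, sum_ite_eq', Finsupp.if_mem_support]

theorem sumAlternant_injective :
    Function.Injective (sumAlternant : ({lam : Fin n → ℕ // Antitone lam} →₀ ℤ) → _) :=
  fun c c' h => Finsupp.ext fun lam => by rw [← coeff_sumAlternant c, h, coeff_sumAlternant]

noncomputable def alternantCoeffs (p : MvPolynomial (Fin n) ℤ) :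
    {lam : Fin n → ℕ // Antitone lam} →₀ ℤ :=
  Finsupp.comapDomain shiftedExponent (AddMonoidAlgebra.coeff p) shiftedExponent_injective.injOn

theorem alternantCoeffs_apply (p : MvPolynomial (Fin n) ℤ)
    (lam : {lam : Fin n → ℕ // Antitone lam}) :
    alternantCoeffs p lam = coeff (shiftedExponent lam) p :=
  rfl

theorem IsAlternatingPoly.sumAlternant_alternantCoeffs {p : MvPolynomial (Fin n) ℤ}
    (hp : IsAlternatingPoly n p) : sumAlternant (alternantCoeffs p) = p := by
  have hq : IsAlternatingPoly n (p - sumAlternant (alternantCoeffs p)) :=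
    sub_mem (mem_alternatingSubmodule.mpr hp) (sumAlternant_mem_alternatingSubmodule _)
  refine (sub_eq_zero.mp (hq.eq_zero_of_coeff_strictAnti fun d hd => ?_)).symm
  obtain ⟨lam, hlam, hd_eq⟩ := hd.exists_antitone_add_staircase
  obtain rfl : d = shiftedExponent ⟨lam, hlam⟩ := DFunLike.coe_injective hd_eq
  rw [coeff_sub, coeff_sumAlternant, alternantCoeffs_apply, sub_self]

end

theorem alternant_properties_and_basis (n : ℕ) :
    (∀ α : Fin n → ℕ, (∃ j k, j ≠ k ∧ α j = α k) → alternant n α = 0) ∧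
    (∀ (α : Fin n → ℕ) (σ : Equiv.Perm (Fin n)), StrictAnti (α ∘ σ) →
      alternant n α = (Equiv.Perm.sign σ : ℤ) • alternant n (α ∘ σ)) ∧
    (∀ p, IsAlternatingPoly n p →
      ∃! c : {lam : Fin n → ℕ // Antitone lam} →₀ ℤ,
        p = c.sum fun lam z =>
          z • alternant n (fun i => lam.1 i + (n - 1 - (i : ℕ)))) := by
  refine ⟨fun α ⟨j, k, hjk, h⟩ => alternant_eq_zero_of_apply_eq hjk h, fun α σ _ => ?_,
    fun p hp => ⟨alternantCoeffs p, hp.sumAlternant_alternantCoeffs.symm,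
      fun c hc => sumAlternant_injective (hc.symm.trans hp.sumAlternant_alternantCoeffs.symm)⟩⟩
  rw [alternant_comp_perm, smul_smul, ← Units.val_mul, Int.units_mul_self, Units.val_one, one_smul]
end

section
/- For every n ∈ ℕ and every composition α, the Schur polynomial satisfies the stability property s_α(X_0,…,X_{n−1}, 0) = s_α(X_0,…,X_{n−2}); here s_α in n variables is defined as a_{δ_n+α}/Δ_n if α ∈ ℕⁿ (where δ_n = (n−1,…,1,0) and Δ_n = a_{δ_n} is the Vandermonde determinant), and 0 if α has a nonzero part beyond index n−1. -/
open scoped Classical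

/-- The Vandermonde determinant `Δ_n = a_{δ_n}` with `δ_n = (n-1, …, 1, 0)`. -/
noncomputable def vandermondePoly (n : ℕ) : MvPolynomial (Fin n) ℤ :=
  alternant n (fun i => n - 1 - (i : ℕ))

/-- `s` is the Schur polynomial `s_α` in `n` variables: `a_{δ_n+α}/Δ_n` when
`α ∈ ℕⁿ` (expressed multiplicatively, as `Δ_n` is a nonzerodivisor), and `0`
when `α` has a nonzero part at an index `≥ n`. -/
def IsSchurPoly (n : ℕ) (α : ℕ → ℕ) (s : MvPolynomial (Fin n) ℤ) : Prop :=
  if ∀ i, n ≤ i → α i = 0 then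
    vandermondePoly n * s = alternant n (fun i : Fin n => (n - 1 - (i : ℕ)) + α i)
  else s = 0

/-!
Since `δ_{n+1} + α = (δ_n + α + 1, α_n)`, setting `X_n = 0` in the alternant `a_{δ_{n+1}+α}`
leaves a last row `(0, …, 0, 0 ^ α_n)`, so by Laplace expansion it becomes
`0 ^ α_n · X_0 ⋯ X_{n-1} · a_{δ_n+α}`; likewise `Δ_{n+1}` becomes `X_0 ⋯ X_{n-1} · Δ_n`.
Both sides of `Δ_{n+1} s_α = a_{δ_{n+1}+α}` thus acquire the factor `X_0 ⋯ X_{n-1}`, and after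
cancelling it and `Δ_n` in the domain `ℤ[X]` what remains is the defining identity of `s_α` in
`n` variables (the factor `0 ^ α_n` vanishes exactly when `α_n ≠ 0`, i.e. when that `s_α` is `0`).
-/

open MvPolynomial

/-- The exponent vector `δ_n + α`. -/
def schurExponent (n : ℕ) (α : ℕ → ℕ) (i : Fin n) : ℕ := n - 1 - (i : ℕ) + α i

noncomputable def schurNumerator (n : ℕ) (α : ℕ → ℕ) : MvPolynomial (Fin n) ℤ :=
  if ∀ i, n ≤ i → α i = 0 then alternant n (schurExponent n α) else 0

lemma schurExponent_succ (n : ℕ) (α : ℕ → ℕ) :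
    schurExponent (n + 1) α = Fin.snoc (fun j => schurExponent n α j + 1) (α n) := by
  ext i
  induction i using Fin.lastCases with
  | last => simp [schurExponent]
  | cast j => simp only [schurExponent, Fin.snoc_castSucc, Fin.val_castSucc]; omega

lemma vandermondePoly_eq_schurNumerator_zero (n : ℕ) :
    vandermondePoly n = schurNumerator n 0 := by
  rw [schurNumerator, if_pos fun _ _ => Pi.zero_apply _]
  rfl

lemma vandermondePoly_ne_zero (n : ℕ) : vandermondePoly n ≠ 0 := by
  have h : vandermondePoly n
      = ((Matrix.vandermonde (fun i : Fin n => (X i : MvPolynomial (Fin n) ℤ))).submatrix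
          id Fin.revPerm).det := by
    unfold vandermondePoly alternant
    congr 1
    ext i j
    simp [Matrix.vandermonde, Fin.val_rev, Nat.sub_sub, Nat.add_comm 1 (j : ℕ)]
  rw [h, Matrix.det_permute']
  simpa using Matrix.det_vandermonde_ne_zero_iff.mpr (X_injective (σ := Fin n) (R := ℤ))

lemma isSchurPoly_iff {n : ℕ} {α : ℕ → ℕ} {s : MvPolynomial (Fin n) ℤ} :
    IsSchurPoly n α s ↔ vandermondePoly n * s = schurNumerator n α := by
  unfold IsSchurPoly schurNumerator
  split_ifs
  · rfl
  · simp [vandermondePoly_ne_zero]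

lemma alternant_add_one (n : ℕ) (γ : Fin n → ℕ) :
    alternant n (fun j => γ j + 1) = (∏ i, (X i : MvPolynomial (Fin n) ℤ)) * alternant n γ := by
  simp only [alternant, pow_succ', ← Matrix.det_mul_column]
  rfl

/-- Laplace expansion along the last row, which becomes `(0, …, 0, 0 ^ k)`. -/
lemma aeval_lastCases_zero_alternant_snoc (n : ℕ) (γ : Fin n → ℕ) (k : ℕ) :
    aeval (Fin.lastCases 0 X) (alternant (n + 1) (Fin.snoc (fun j => γ j + 1) k))
      = 0 ^ k * ((∏ i, (X i : MvPolynomial (Fin n) ℤ)) * alternant n γ) := by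
  rw [alternant, ← AlgHom.coe_toRingHom, RingHom.map_det, Matrix.det_succ_row _ (Fin.last n),
    Fin.sum_univ_castSucc, ← alternant_add_one, alternant]
  simp [Fin.succAbove_last, Matrix.submatrix, Matrix.map]

lemma aeval_lastCases_zero_schurNumerator (n : ℕ) (α : ℕ → ℕ) :
    aeval (Fin.lastCases 0 X) (schurNumerator (n + 1) α)
      = (∏ i, (X i : MvPolynomial (Fin n) ℤ)) * schurNumerator n α := by
  by_cases hα : ∀ i, n + 1 ≤ i → α i = 0
  · rw [schurNumerator, if_pos hα, schurExponent_succ, aeval_lastCases_zero_alternant_snoc,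
      schurNumerator]
    by_cases hαn : α n = 0
    · have hα' : ∀ i, n ≤ i → α i = 0 := fun i hi =>
        (Nat.eq_or_lt_of_le hi).elim (fun h => h ▸ hαn) (hα i)
      rw [if_pos hα', hαn, pow_zero, one_mul]
    · rw [if_neg fun h => hαn (h n le_rfl), zero_pow hαn, zero_mul, mul_zero]
  · rw [schurNumerator, if_neg hα, schurNumerator,
      if_neg fun h => hα fun i hi => h i (Nat.le_of_succ_le hi), map_zero, mul_zero]

lemma aeval_lastCases_zero_vandermondePoly (n : ℕ) :
    aeval (Fin.lastCases 0 X) (vandermondePoly (n + 1))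
      = (∏ i, (X i : MvPolynomial (Fin n) ℤ)) * vandermondePoly n := by
  simp only [vandermondePoly_eq_schurNumerator_zero, aeval_lastCases_zero_schurNumerator]

/-- Stability of Schur polynomials under setting the last variable to `0`. -/
theorem schur_polynomial_stability (n : ℕ) (α : ℕ → ℕ)
    (s₁ : MvPolynomial (Fin (n + 1)) ℤ) (s₀ : MvPolynomial (Fin n) ℤ)
    (h₁ : IsSchurPoly (n + 1) α s₁) (h₀ : IsSchurPoly n α s₀) :
    MvPolynomial.aeval (Fin.lastCases 0 MvPolynomial.X) s₁ = s₀ := by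
  rw [isSchurPoly_iff] at h₁ h₀
  have hX : (∏ i, (X i : MvPolynomial (Fin n) ℤ)) ≠ 0 :=
    Finset.prod_ne_zero_iff.mpr fun i _ => X_ne_zero i
  refine mul_left_cancel₀ (mul_ne_zero hX (vandermondePoly_ne_zero n)) ?_
  calc (∏ i, X i) * vandermondePoly n * aeval (Fin.lastCases 0 X) s₁
      = aeval (Fin.lastCases 0 X) (vandermondePoly (n + 1) * s₁) := by
        rw [map_mul, aeval_lastCases_zero_vandermondePoly]
    _ = (∏ i, X i) * (vandermondePoly n * s₀) := by
      rw [h₁, aeval_lastCases_zero_schurNumerator, h₀]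
    _ = (∏ i, X i) * vandermondePoly n * s₀ := (mul_assoc _ _ _).symm
end
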